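/- arXiv:2411.06883 — 5 statements merged into one kernel-verified Lean document; each statement's English description precedes it below -/
import Mathlib

section
/- If A ∈ ℝ^{n×n} is semi-Schur, then ℝ^n is the direct sum of the range of A − I and the kernel of A − I, i.e., ran(A − I) + ker(A − I) = ℝ^n and ran(A − I) ∩ ker(A − I) = {0}. -/
open Matrix Polynomial

/-- The characteristic polynomial of a real matrix, viewed over `ℂ`. Its roots are the
(complex) eigenvalues of the matrix. -/
noncomputable def charpolyC {ι : Type*} [Fintype ι] [DecidableEq ι]
    (A : Matrix ι ι ℝ) : Polynomial ℂ :=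
  (A.charpoly).map (algebraMap ℝ ℂ)

/-- A real square matrix is *semi-Schur* if every (complex) eigenvalue either has modulus
strictly less than `1`, or equals `1` and `1` is non-defective (its geometric multiplicity
`dim ker (A - I)` equals its algebraic multiplicity as a root of the characteristic
polynomial). -/
def IsSemiSchur {ι : Type*} [Fintype ι] [DecidableEq ι] (A : Matrix ι ι ℝ) : Prop :=
  ∀ μ : ℂ, (charpolyC A).IsRoot μ →
    ‖μ‖ < 1 ∨ (μ = 1 ∧
      Module.finrank ℝ (LinearMap.ker (A - 1).mulVecLin) = (charpolyC A).rootMultiplicity 1)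

/-! The semi-Schur condition at the eigenvalue `1` says that `ker (A - I)` has the dimension of the
whole generalized eigenspace of `1`, so the two coincide and `ker (A - I)² = ker (A - I)`. Hence a
vector `(A - I) y` lying in the kernel is zero, i.e. range and kernel are disjoint, and by
rank–nullity they are complementary. -/

open Module

namespace Module.End

variable {K V : Type*} [Field K] [AddCommGroup V] [Module K V] [FiniteDimensional K V]

theorem isCompl_range_ker_of_ker_sq_le {f : End K V}
    (h : LinearMap.ker (f ^ 2) ≤ LinearMap.ker f) :
    IsCompl (LinearMap.range f) (LinearMap.ker f) := by
  refine (Submodule.isCompl_iff_disjoint _ _ (LinearMap.finrank_range_add_finrank_ker f).ge).2 ?_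
  rw [Submodule.disjoint_def]
  rintro _ ⟨y, rfl⟩ hfy
  exact h (by simpa [pow_two] using hfy)

theorem ker_pow_le_ker_of_finrank_maxGenEigenspace_le {f : End K V}
    (h : finrank K (f.maxGenEigenspace 0) ≤ finrank K (LinearMap.ker f)) (k : ℕ) :
    LinearMap.ker (f ^ k) ≤ LinearMap.ker f := by
  have hker_le : LinearMap.ker f ≤ f.maxGenEigenspace 0 := fun x hx ↦
    (mem_maxGenEigenspace f 0 x).2 ⟨1, by simpa using hx⟩
  rw [Submodule.eq_of_le_of_finrank_le hker_le h]
  exact fun x hx ↦ (mem_maxGenEigenspace f 0 x).2 ⟨k, by simpa using hx⟩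

end Module.End

theorem Matrix.finrank_maxGenEigenspace_sub_smul_one {K ι : Type*} [Field K] [Fintype ι]
    [DecidableEq ι] (A : Matrix ι ι K) (μ : K) :
    finrank K (End.maxGenEigenspace (A - μ • 1).mulVecLin 0) =
      A.charpoly.rootMultiplicity μ := by
  have hlin : (A - μ • 1).mulVecLin = A.mulVecLin - μ • 1 := by
    ext
    simp
  rw [hlin, ← End.maxGenEigenspace_eq_maxGenEigenspace_zero,
    LinearMap.finrank_maxGenEigenspace_eq, charpoly_mulVecLin]

theorem rootMultiplicity_charpolyC {ι : Type*} [Fintype ι] [DecidableEq ι]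
    (A : Matrix ι ι ℝ) (μ : ℝ) :
    (charpolyC A).rootMultiplicity (μ : ℂ) = A.charpoly.rootMultiplicity μ :=
  (eq_rootMultiplicity_map (algebraMap ℝ ℂ).injective μ).symm

theorem IsSemiSchur.finrank_maxGenEigenspace_le {ι : Type*} [Fintype ι] [DecidableEq ι]
    {A : Matrix ι ι ℝ} (hA : IsSemiSchur A) :
    finrank ℝ (End.maxGenEigenspace (A - 1).mulVecLin 0) ≤
      finrank ℝ (LinearMap.ker (A - 1).mulVecLin) := by
  have hmult := rootMultiplicity_charpolyC A 1
  rw [← one_smul ℝ (1 : Matrix ι ι ℝ), finrank_maxGenEigenspace_sub_smul_one, one_smul,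
    ← hmult, Complex.ofReal_one]
  by_cases hroot : (charpolyC A).IsRoot 1
  · rcases hA 1 hroot with hlt | ⟨-, hgeom⟩
    · simp at hlt
    · exact hgeom.ge
  · simp [rootMultiplicity_eq_zero hroot]

/-- If `A` is semi-Schur, then `ℝⁿ = ran(A - I) ⊕ ker(A - I)`. -/
theorem semiSchur_range_ker_direct_sum {n : ℕ} (A : Matrix (Fin n) (Fin n) ℝ)
    (hA : IsSemiSchur A) :
    LinearMap.range (A - 1).mulVecLin ⊔ LinearMap.ker (A - 1).mulVecLin = ⊤ ∧
      LinearMap.range (A - 1).mulVecLin ⊓ LinearMap.ker (A - 1).mulVecLin = ⊥ := by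
  have hcompl := End.isCompl_range_ker_of_ker_sq_le
    (End.ker_pow_le_ker_of_finrank_maxGenEigenspace_le hA.finrank_maxGenEigenspace_le 2)
  exact ⟨hcompl.sup_eq_top, hcompl.inf_eq_bot⟩
end

section
/- Let A ∈ ℝ^{n×n} be semi-Schur and B ∈ ℝ^{n×m} satisfy ran(B) ⊆ ran(A − I). Let w : ℕ → ℝ^m, let x_0 ∈ ℝ^n, and let x : ℕ → ℝ^n be defined by x(0) = x_0 and x(k+1) = A x(k) + B w(k). Let x* be the oblique projection of x_0 onto ker(A − I) along ran(A − I). Then there exist constants c_1, c_2, c_3 > 0 (independent of x_0 and w) such that for all k ∈ ℕ: ‖x(k) − x*‖ ≤ c_1 e^{−c_2 k} ‖x_0 − x*‖ + c_3 · max_{l∈ℕ, l ≤ k} ‖w(l)‖. -/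
open Matrix Polynomial

/-!
On `ran (A - 1)`, which is `A`-invariant and meets `ker (A - 1)` trivially because the
eigenvalue `1` is non-defective, every complex eigenvalue of `A` has modulus `< 1`. Gelfand's
formula, applied to the complexified restriction, then gives geometric decay
`‖A ^ k v‖ ≤ C r ^ k ‖v‖` for `v ∈ ran (A - 1)`. Since `A x* = x*`, the error `e k = x k - x*`
solves `e (k + 1) = A e k + B w k` with `e 0` and every `B w k` in `ran (A - 1)`, and the
variation-of-constants formula with a geometric series yields the estimate with `c₁ = C`,
`c₂ = -log r` and `c₃ = C K / (1 - r)`, where `‖B w‖ ≤ K ‖w‖`.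
-/

open Filter Module
open scoped NNReal

theorem spectrum.eventually_norm_pow_le_of_spectralRadius_lt {A : Type*} [NormedRing A]
    [NormedAlgebra ℂ A] [CompleteSpace A] (a : A) {r : ℝ≥0} (h : spectralRadius ℂ a < r) :
    ∀ᶠ k : ℕ in atTop, ‖a ^ k‖ ≤ (r : ℝ) ^ k := by
  filter_upwards [(pow_norm_pow_one_div_tendsto_nhds_spectralRadius a).eventually_lt_const h,
    eventually_ge_atTop 1] with k hk hk1
  rw [one_div, ENNReal.ofReal_lt_coe_iff (by positivity), Real.rpow_inv_lt_iff_of_pos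
    (norm_nonneg _) r.coe_nonneg (by positivity), Real.rpow_natCast] at hk
  exact hk.le

theorem spectrum.exists_norm_pow_le_of_forall_norm_lt_one {A : Type*} [NormedRing A]
    [NormedAlgebra ℂ A] [CompleteSpace A] (a : A) (h : ∀ μ ∈ spectrum ℂ a, ‖μ‖ < 1) :
    ∃ C > 0, ∃ r : ℝ, 0 < r ∧ r < 1 ∧ ∀ k : ℕ, ‖a ^ k‖ ≤ C * r ^ k := by
  have hρ : spectralRadius ℂ a < 1 := by
    rcases (spectrum ℂ a).eq_empty_or_nonempty with hempty | hne
    · simp [spectralRadius, hempty]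
    · exact spectrum.spectralRadius_lt_of_forall_lt_of_nonempty hne
        fun μ hμ => by exact_mod_cast h μ hμ
  obtain ⟨r, hρr, hr1⟩ := ENNReal.lt_iff_exists_nnreal_btwn.1 hρ
  have hr0 : (0 : ℝ) < r := by exact_mod_cast pos_of_gt hρr
  have hbigO : (fun k : ℕ => a ^ k) =O[atTop] fun k => (r : ℝ) ^ k :=
    Asymptotics.IsBigO.of_bound 1 <| (eventually_norm_pow_le_of_spectralRadius_lt a hρr).mono
      fun k hk => by rwa [one_mul, Real.norm_of_nonneg (by positivity)]
  obtain ⟨C, hC, hbound⟩ := Asymptotics.bound_of_isBigO_nat_atTop hbigO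
  refine ⟨C, hC, r, hr0, by exact_mod_cast hr1, fun k => ?_⟩
  simpa [abs_of_pos hr0] using hbound (pow_ne_zero k hr0.ne')

namespace Module.End

theorem disjoint_eigenspace_range_of_finrank_eq {K V : Type*} [Field K]
    [AddCommGroup V] [Module K V] [FiniteDimensional K V] {f : Module.End K V} {μ : K}
    (h : finrank K (f.eigenspace μ) = f.charpoly.rootMultiplicity μ) :
    Disjoint (f.eigenspace μ) (LinearMap.range (f - μ • 1)) := by
  have hmax : f.eigenspace μ = f.maxGenEigenspace μ :=
    Submodule.eq_of_le_of_finrank_le eigenspace_le_maxGenEigenspace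
      (by rw [LinearMap.finrank_maxGenEigenspace_eq, h])
  rw [Submodule.disjoint_def]
  rintro _ hx ⟨z, rfl⟩
  have hz : z ∈ f.maxGenEigenspace μ := by
    refine (mem_maxGenEigenspace f μ z).2 ⟨2, ?_⟩
    rw [eigenspace_def, LinearMap.mem_ker] at hx
    rwa [pow_two, Module.End.mul_apply]
  rwa [← hmax, eigenspace_def, LinearMap.mem_ker] at hz

section Normed

variable {E : Type*} [NormedAddCommGroup E] [NormedSpace ℂ E] [FiniteDimensional ℂ E]

theorem exists_norm_pow_apply_le_of_forall_norm_lt_one (f : Module.End ℂ E)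
    (h : ∀ μ, f.HasEigenvalue μ → ‖μ‖ < 1) :
    ∃ C > 0, ∃ r : ℝ, 0 < r ∧ r < 1 ∧ ∀ (k : ℕ) (x : E), ‖(f ^ k) x‖ ≤ C * r ^ k * ‖x‖ := by
  have : CompleteSpace E := FiniteDimensional.complete ℂ E
  set f' := LinearMap.toContinuousLinearMap f
  obtain ⟨C, hC, r, hr0, hr1, hpow⟩ := spectrum.exists_norm_pow_le_of_forall_norm_lt_one f'
    fun μ hμ => h μ <| hasEigenvalue_iff_mem_spectrum.2 <| by
      rwa [ContinuousLinearMap.spectrum_eq] at hμ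
  refine ⟨C, hC, r, hr0, hr1, fun k x => ?_⟩
  have hfk : (f ^ k) x = (f' ^ k) x := by
    rw [← ContinuousLinearMap.coe_coe, ContinuousLinearMap.toLinearMap_pow]; rfl
  rw [hfk]
  exact (f' ^ k).le_of_opNorm_le (hpow k) x

theorem exists_norm_pow_apply_le_of_disjoint (f : Module.End ℂ E)
    (hdisj : Disjoint (f.eigenspace 1) (LinearMap.range (f - 1)))
    (h : ∀ μ, f.HasEigenvalue μ → μ ≠ 1 → ‖μ‖ < 1) :
    ∃ C > 0, ∃ r : ℝ, 0 < r ∧ r < 1 ∧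
      ∀ (k : ℕ), ∀ x ∈ LinearMap.range (f - 1), ‖(f ^ k) x‖ ≤ C * r ^ k * ‖x‖ := by
  have hinv : ∀ x ∈ LinearMap.range (f - 1), f x ∈ LinearMap.range (f - 1) := by
    rintro _ ⟨z, rfl⟩
    exact ⟨f z, by simp only [LinearMap.sub_apply, Module.End.one_apply, map_sub]⟩
  obtain ⟨C, hC, r, hr0, hr1, hpow⟩ :=
    exists_norm_pow_apply_le_of_forall_norm_lt_one (f.restrict hinv) fun μ hμ => by
      refine h μ ?_ ?_
      · obtain ⟨v, hv⟩ := hμ.exists_hasEigenvector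
        exact hasEigenvalue_of_hasEigenvector
          ⟨eigenspace_restrict_le_eigenspace f hinv μ ⟨v, hv.1, rfl⟩, by simpa using hv.2⟩
      · rintro rfl
        exact hμ (eigenspace_restrict_eq_bot hinv hdisj)
  refine ⟨C, hC, r, hr0, hr1, fun k x hx => ?_⟩
  simpa [Module.End.pow_restrict k hinv] using hpow k ⟨x, hx⟩

end Normed

theorem eq_pow_apply_add_sum {R M : Type*} [Semiring R] [AddCommMonoid M] [Module R M]
    (T : Module.End R M) {y u : ℕ → M} (hy : ∀ k, y (k + 1) = T (y k) + u k) (k : ℕ) :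
    y k = (T ^ k) (y 0) + ∑ l ∈ Finset.range k, (T ^ l) (u (k - 1 - l)) := by
  induction k with
  | zero => simp
  | succ k ih =>
    rw [hy, ih, map_add, map_sum, Finset.sum_range_succ', add_assoc]
    simp only [pow_succ', Module.End.mul_apply, pow_zero, Module.End.one_apply, Nat.sub_zero,
      Nat.add_sub_cancel, Nat.sub_sub, add_comm 1]

theorem norm_le_of_norm_pow_apply_le {E : Type*} [SeminormedAddCommGroup E] [Module ℝ E]
    (T : Module.End ℝ E) (p : Submodule ℝ E) {C r : ℝ} (hC : 0 ≤ C) (hr0 : 0 ≤ r) (hr1 : r < 1)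
    (hT : ∀ k, ∀ v ∈ p, ‖(T ^ k) v‖ ≤ C * r ^ k * ‖v‖) {y u : ℕ → E}
    (hy : ∀ k, y (k + 1) = T (y k) + u k) (hy0 : y 0 ∈ p) (hu : ∀ k, u k ∈ p) {k : ℕ} {U : ℝ}
    (hU0 : 0 ≤ U) (hU : ∀ l < k, ‖u l‖ ≤ U) :
    ‖y k‖ ≤ C * r ^ k * ‖y 0‖ + C / (1 - r) * U := by
  have hterm : ∀ l ∈ Finset.range k, ‖(T ^ l) (u (k - 1 - l))‖ ≤ C * U * r ^ l := fun l hl => by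
    have hlk : k - 1 - l < k := by have := Finset.mem_range.1 hl; omega
    calc ‖(T ^ l) (u (k - 1 - l))‖ ≤ C * r ^ l * ‖u (k - 1 - l)‖ := hT l (u (k - 1 - l)) (hu _)
      _ ≤ C * r ^ l * U := by gcongr; exact hU _ hlk
      _ = C * U * r ^ l := by ring
  have hgeom : ∑ l ∈ Finset.range k, r ^ l ≤ 1 / (1 - r) := by
    have := geom_sum_Ico_le_of_lt_one (m := 0) (n := k) hr0 hr1
    rwa [← Finset.range_eq_Ico, pow_zero] at this
  calc ‖y k‖ ≤ ‖(T ^ k) (y 0)‖ + ∑ l ∈ Finset.range k, ‖(T ^ l) (u (k - 1 - l))‖ := by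
        rw [T.eq_pow_apply_add_sum hy k]
        exact (norm_add_le _ _).trans (by gcongr; exact norm_sum_le _ _)
    _ ≤ C * r ^ k * ‖y 0‖ + C * U * ∑ l ∈ Finset.range k, r ^ l := by
        rw [Finset.mul_sum]
        exact add_le_add (hT k _ hy0) (Finset.sum_le_sum hterm)
    _ ≤ C * r ^ k * ‖y 0‖ + C * U * (1 / (1 - r)) := by
        gcongr
    _ = C * r ^ k * ‖y 0‖ + C / (1 - r) * U := by ring

end Module.End

section Matrix

variable {ι : Type*} [Fintype ι]

theorem Matrix.re_map_mulVec (M : Matrix ι ι ℝ) (u : ι → ℂ) :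
    (fun i => ((M.map (algebraMap ℝ ℂ)) *ᵥ u) i |>.re) = M *ᵥ fun i => (u i).re := by
  ext i
  simp [mulVec, dotProduct, Complex.re_sum]

theorem Matrix.im_map_mulVec (M : Matrix ι ι ℝ) (u : ι → ℂ) :
    (fun i => ((M.map (algebraMap ℝ ℂ)) *ᵥ u) i |>.im) = M *ᵥ fun i => (u i).im := by
  ext i
  simp [mulVec, dotProduct, Complex.im_sum]

theorem Matrix.disjoint_ker_range_map_algebraMap {M : Matrix ι ι ℝ}
    (h : Disjoint (LinearMap.ker M.mulVecLin) (LinearMap.range M.mulVecLin)) :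
    Disjoint (LinearMap.ker (M.map (algebraMap ℝ ℂ)).mulVecLin)
      (LinearMap.range (M.map (algebraMap ℝ ℂ)).mulVecLin) := by
  rw [Submodule.disjoint_def] at h ⊢
  rintro _ hx ⟨z, rfl⟩
  simp only [LinearMap.mem_ker, mulVecLin_apply] at hx ⊢
  have hre := h _ (by rw [LinearMap.mem_ker, mulVecLin_apply, ← re_map_mulVec, hx]; rfl)
    ⟨_, (re_map_mulVec M z).symm⟩
  have him := h _ (by rw [LinearMap.mem_ker, mulVecLin_apply, ← im_map_mulVec, hx]; rfl)
    ⟨_, (im_map_mulVec M z).symm⟩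
  funext i
  exact Complex.ext (congrFun hre i) (congrFun him i)

theorem Matrix.map_algebraMap_mulVec (M : Matrix ι ι ℝ) (v : ι → ℝ) :
    M.map (algebraMap ℝ ℂ) *ᵥ (algebraMap ℝ ℂ ∘ v) = algebraMap ℝ ℂ ∘ (M *ᵥ v) :=
  funext fun i => (RingHom.map_mulVec _ M v i).symm

theorem norm_algebraMap_comp (v : ι → ℝ) : ‖(algebraMap ℝ ℂ) ∘ v‖ = ‖v‖ := by
  simp [Pi.norm_def, Complex.nnnorm_real]

variable [DecidableEq ι]

theorem Matrix.mulVecLin_pow_apply {R : Type*} [CommSemiring R] (M : Matrix ι ι R) (k : ℕ)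
    (v : ι → R) : (M.mulVecLin ^ k) v = (M ^ k) *ᵥ v := by
  induction k with
  | zero => simp
  | succ k ih =>
    rw [pow_succ', Module.End.mul_apply, ih, mulVecLin_apply, mulVec_mulVec, ← pow_succ']

theorem IsSemiSchur.disjoint_ker_range {A : Matrix ι ι ℝ} (hA : IsSemiSchur A) :
    Disjoint (LinearMap.ker (A - 1).mulVecLin) (LinearMap.range (A - 1).mulVecLin) := by
  have hsub : (A - 1).mulVecLin = A.mulVecLin - (1 : ℝ) • 1 :=
    LinearMap.ext fun v => by simp
  rw [hsub, ← End.eigenspace_def]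
  refine End.disjoint_eigenspace_range_of_finrank_eq
    (le_antisymm (LinearMap.finrank_eigenspace_le _ _) ?_)
  rw [Matrix.charpoly_mulVecLin, End.eigenspace_def, ← hsub]
  by_cases hroot : A.charpoly.IsRoot 1
  · have hrootC : (charpolyC A).IsRoot 1 := by
      rw [charpolyC, ← map_one (algebraMap ℝ ℂ)]
      exact hroot.map
    rw [((hA 1 hrootC).resolve_left (by simp)).2, charpolyC, ← map_one (algebraMap ℝ ℂ),
      ← eq_rootMultiplicity_map (algebraMap ℝ ℂ).injective]
  · simp [rootMultiplicity_eq_zero hroot]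

theorem IsSemiSchur.exists_norm_pow_mulVec_le {A : Matrix ι ι ℝ} (hA : IsSemiSchur A) :
    ∃ C > 0, ∃ r : ℝ, 0 < r ∧ r < 1 ∧
      ∀ (k : ℕ), ∀ v ∈ LinearMap.range (A - 1).mulVecLin, ‖(A ^ k) *ᵥ v‖ ≤ C * r ^ k * ‖v‖ := by
  set φ := (algebraMap ℝ ℂ).mapMatrix (m := ι)
  have hsub : (φ A).mulVecLin - 1 = (φ (A - 1)).mulVecLin := by
    rw [map_sub, map_one]
    exact LinearMap.ext fun v => by simp
  obtain ⟨C, hC, r, hr0, hr1, hdecay⟩ := End.exists_norm_pow_apply_le_of_disjoint (φ A).mulVecLin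
    (by
      rw [End.eigenspace_def, one_smul, hsub]
      exact disjoint_ker_range_map_algebraMap hA.disjoint_ker_range)
    (fun μ hμ hμ1 => by
      have hroot : (charpolyC A).IsRoot μ := by
        rwa [charpolyC, ← charpoly_map, ← charpoly_mulVecLin,
          ← End.hasEigenvalue_iff_isRoot_charpoly]
      exact (hA μ hroot).resolve_right fun h => hμ1 h.1)
  refine ⟨C, hC, r, hr0, hr1, fun k v ⟨z, hz⟩ => ?_⟩
  have hmem : (algebraMap ℝ ℂ) ∘ v ∈ LinearMap.range ((φ A).mulVecLin - 1) :=
    ⟨algebraMap ℝ ℂ ∘ z, by rw [hsub, ← hz]; exact map_algebraMap_mulVec (A - 1) z⟩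
  have := hdecay k _ hmem
  rwa [mulVecLin_pow_apply, ← map_pow, RingHom.mapMatrix_apply, map_algebraMap_mulVec,
    norm_algebraMap_comp, norm_algebraMap_comp] at this

end Matrix

/-- ISS-type estimate for the discrete-time LTI system `x(k+1) = A x(k) + B w(k)` with a
semi-Schur matrix `A` and `ran(B) ⊆ ran(A - I)`: the iterates converge, up to the oblique
projection `x*` of `x₀` onto `ker (A - I)` along `ran (A - I)`, exponentially with an input
gain on `max_{l ≤ k} ‖w(l)‖`. The constants are independent of `x₀` and `w`. -/
theorem semiSchur_LTI_ISS {n m : ℕ} (A : Matrix (Fin n) (Fin n) ℝ)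
    (B : Matrix (Fin n) (Fin m) ℝ)
    (hA : IsSemiSchur A)
    (hB : LinearMap.range B.mulVecLin ≤ LinearMap.range (A - 1).mulVecLin) :
    ∃ c₁ > (0:ℝ), ∃ c₂ > (0:ℝ), ∃ c₃ > (0:ℝ),
      ∀ (w : ℕ → Fin m → ℝ) (x₀ : Fin n → ℝ) (x : ℕ → Fin n → ℝ),
        x 0 = x₀ →
        (∀ k : ℕ, x (k + 1) = A.mulVec (x k) + B.mulVec (w k)) →
        ∀ xstar : Fin n → ℝ,
          xstar ∈ LinearMap.ker (A - 1).mulVecLin →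
          x₀ - xstar ∈ LinearMap.range (A - 1).mulVecLin →
          ∀ k : ℕ,
            ‖x k - xstar‖ ≤ c₁ * Real.exp (-c₂ * k) * ‖x₀ - xstar‖ +
              c₃ * (Finset.range (k + 1)).sup' Finset.nonempty_range_add_one (fun l => ‖w l‖) := by
  obtain ⟨C, hC, r, hr0, hr1, hdecay⟩ := hA.exists_norm_pow_mulVec_le
  obtain ⟨K, hK, hBK⟩ := (LinearMap.toContinuousLinearMap B.mulVecLin).bound
  have hr1' : 0 < 1 - r := sub_pos.2 hr1
  refine ⟨C, hC, -Real.log r, neg_pos.2 (Real.log_neg hr0 hr1), C * K / (1 - r), by positivity, ?_⟩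
  intro w x₀ x hx0 hx xstar hxstar hx₀ k
  have hfix : A *ᵥ xstar = xstar := by
    rwa [LinearMap.mem_ker, mulVecLin_apply, sub_mulVec, one_mulVec, sub_eq_zero] at hxstar
  set W := (Finset.range (k + 1)).sup' Finset.nonempty_range_add_one fun l => ‖w l‖
  have hW : ∀ l ≤ k, ‖w l‖ ≤ W := fun l hl =>
    Finset.le_sup' (fun l => ‖w l‖) (Finset.mem_range.2 (Nat.lt_succ_of_le hl))
  have herr : ∀ l, x (l + 1) - xstar = A.mulVecLin (x l - xstar) + B *ᵥ w l := fun l => by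
    simp only [hx, mulVecLin_apply, mulVec_sub, hfix]; abel
  have hinput : ∀ l < k, ‖B *ᵥ w l‖ ≤ K * W := fun l hl =>
    (hBK (w l)).trans (mul_le_mul_of_nonneg_left (hW l hl.le) hK.le)
  have hbound := End.norm_le_of_norm_pow_apply_le A.mulVecLin (LinearMap.range (A - 1).mulVecLin)
    hC.le hr0.le hr1 (fun k v hv => by rw [mulVecLin_pow_apply]; exact hdecay k v hv)
    (y := fun l => x l - xstar) herr (by rwa [hx0]) (fun l => hB ⟨w l, rfl⟩)
    (mul_nonneg hK.le ((norm_nonneg _).trans (hW 0 k.zero_le))) hinput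
  calc ‖x k - xstar‖ ≤ C * r ^ k * ‖x 0 - xstar‖ + C / (1 - r) * (K * W) := hbound
    _ = _ := by rw [neg_neg, Real.exp_mul, Real.exp_log hr0, Real.rpow_natCast, hx0]; ring
end

section
/- Let A ∈ ℝ^{n×n} be semi-Schur, let x_0 ∈ ℝ^n, and let x(k) = A^k x_0. Let x* be the oblique projection of x_0 onto ker(A − I) along ran(A − I). Then x(k) converges to x* exponentially fast: there exist C > 0 and c > 0 such that ‖A^k x_0 − x*‖ ≤ C e^{−c k} for all k ∈ ℕ. -/
open Matrix Polynomial

/-!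
Put `y = x₀ - x*`; since `A x* = x*`, we have `Aᵏ x₀ - x* = Aᵏ y`. Factor the characteristic
polynomial as `(X - 1)ᵐ q` with `q(1) ≠ 0`, so that every complex root of `q` has modulus `< 1`.
Non-defectiveness of `1` says `ker (A - I)ᵐ = ker (A - I)`. Writing `y = (A - I) u`,
Cayley–Hamilton gives `(A - I)ᵐ q(A) u = 0`, hence `q(A) u ∈ ker (A - I)` and
`q(A) y = (A - I) q(A) u = 0`. Over `ℂ`, `q` is a product of factors `X - μ` with `|μ| < 1`;
peeling them off one at a time with `Aᵏ v = μᵏ v + ∑_{j<k} μ^(k-1-j) Aʲ (A - μ) v` shows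
that `Aᵏ y` decays geometrically.
-/

open Finset Module

theorem Module.End.pow_apply_eq_sum_add {R M : Type*} [CommRing R] [AddCommGroup M] [Module R M]
    (φ : End R M) (μ : R) (v : M) (k : ℕ) :
    (φ ^ k) v = ∑ j ∈ range k, μ ^ (k - 1 - j) • (φ ^ j) (φ v - μ • v) + μ ^ k • v := by
  have h := (Algebra.commute_algebraMap_right μ (φ - algebraMap R (End R M) μ)).geom_sum₂_mul_add k
  rw [sub_add_cancel] at h
  simp only [← map_pow] at h
  rw [← h]
  simp only [LinearMap.add_apply, LinearMap.sum_apply, End.mul_apply, Module.algebraMap_end_apply,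
    LinearMap.sub_apply, map_smul]

theorem Module.End.maxGenEigenspace_eq_eigenspace_of_finrank_eq {K V : Type*} [Field K]
    [AddCommGroup V] [Module K V] [FiniteDimensional K V] {f : End K V} {μ : K}
    (h : finrank K (f.eigenspace μ) = f.charpoly.rootMultiplicity μ) :
    f.maxGenEigenspace μ = f.eigenspace μ :=
  (Submodule.eq_of_le_of_finrank_le End.eigenspace_le_maxGenEigenspace
    (by rw [LinearMap.finrank_maxGenEigenspace_eq, h])).symm

theorem Module.End.aeval_apply_eq_zero_of_mem_range {R M : Type*} [CommRing R] [AddCommGroup M]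
    [Module R M] {f : End R M} {μ : R} {m : ℕ} {q : R[X]}
    (hf : aeval f ((X - C μ) ^ m * q) = 0) (hμ : f.maxGenEigenspace μ = f.eigenspace μ) {y : M}
    (hy : y ∈ LinearMap.range (f - μ • 1)) : aeval f q y = 0 := by
  obtain ⟨u, rfl⟩ := hy
  have hX : aeval f (X - C μ) = f - μ • 1 := by
    rw [map_sub, aeval_X, aeval_C, Algebra.algebraMap_eq_smul_one]
  have hqu : aeval f q u ∈ f.maxGenEigenspace μ :=
    (End.mem_maxGenEigenspace f μ _).mpr ⟨m, by rw [← hX, ← map_pow, ← End.mul_apply,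
      ← map_mul, hf, LinearMap.zero_apply]⟩
  rw [hμ, End.eigenspace_def, LinearMap.mem_ker] at hqu
  rw [← hX, ← End.mul_apply, ← map_mul, mul_comm, map_mul, End.mul_apply, hX, hqu]

theorem exists_nat_mul_pow_le {s t : ℝ} (hs : 0 ≤ s) (hst : s < t) :
    ∃ C, ∀ k : ℕ, k * s ^ k ≤ C * t ^ k := by
  have ht : 0 < t := hs.trans_lt hst
  have hsum : Summable fun k : ℕ => (k : ℝ) * (s / t) ^ k := by
    simpa using summable_pow_mul_geometric_of_norm_lt_one 1
      (by rwa [Real.norm_of_nonneg (by positivity), div_lt_one ht])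
  refine ⟨∑' k : ℕ, (k : ℝ) * (s / t) ^ k, fun k => ?_⟩
  calc (k : ℝ) * s ^ k = k * (s / t) ^ k * t ^ k := by
        rw [div_pow, mul_assoc, div_mul_cancel₀ _ (pow_pos ht k).ne']
    _ ≤ _ := by gcongr; exact hsum.le_tsum k fun j _ => by positivity

section GeometricDecay

variable {E : Type*} [SeminormedAddCommGroup E]

def DecaysGeometrically (f : ℕ → E) : Prop :=
  ∃ r ∈ Set.Ioo (0 : ℝ) 1, ∃ C, ∀ k, ‖f k‖ ≤ C * r ^ k

theorem DecaysGeometrically.exists_exp_bound {f : ℕ → E} (hf : DecaysGeometrically f) :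
    ∃ C > (0 : ℝ), ∃ c > (0 : ℝ), ∀ k : ℕ, ‖f k‖ ≤ C * Real.exp (-c * k) := by
  obtain ⟨r, ⟨hr0, hr1⟩, C, hC⟩ := hf
  refine ⟨max C 1, by positivity, -Real.log r, neg_pos.mpr (Real.log_neg hr0 hr1), fun k => ?_⟩
  rw [show -(-Real.log r) * k = k * Real.log r by ring, Real.exp_nat_mul, Real.exp_log hr0]
  exact (hC k).trans (by gcongr; exact le_max_left C 1)

theorem DecaysGeometrically.congr_norm {F : Type*} [SeminormedAddCommGroup F] {f : ℕ → E}
    {g : ℕ → F} (hf : DecaysGeometrically f) (h : ∀ k, ‖g k‖ = ‖f k‖) :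
    DecaysGeometrically g := by
  obtain ⟨r, hr, C, hC⟩ := hf
  exact ⟨r, hr, C, fun k => (h k).trans_le (hC k)⟩

theorem DecaysGeometrically.add {f g : ℕ → E} (hf : DecaysGeometrically f)
    (hg : DecaysGeometrically g) : DecaysGeometrically (f + g) := by
  obtain ⟨r, ⟨hr0, hr1⟩, C, hC⟩ := hf
  obtain ⟨s, ⟨hs0, hs1⟩, D, hD⟩ := hg
  have hC0 : 0 ≤ C := (norm_nonneg _).trans (by simpa using hC 0)
  have hD0 : 0 ≤ D := (norm_nonneg _).trans (by simpa using hD 0)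
  refine ⟨max r s, ⟨lt_max_of_lt_left hr0, max_lt hr1 hs1⟩, C + D, fun k => ?_⟩
  calc ‖f k + g k‖ ≤ C * r ^ k + D * s ^ k := norm_add_le_of_le (hC k) (hD k)
    _ ≤ C * max r s ^ k + D * max r s ^ k := by
        gcongr
        exacts [le_max_left r s, le_max_right r s]
    _ = (C + D) * max r s ^ k := by ring

variable {𝕜 : Type*} [NormedField 𝕜] [NormedSpace 𝕜 E]

theorem decaysGeometrically_pow_smul {μ : 𝕜} (hμ : ‖μ‖ < 1) (v : E) :
    DecaysGeometrically fun k => μ ^ k • v := by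
  refine ⟨max ‖μ‖ (1 / 2), ⟨by positivity, max_lt hμ (by norm_num)⟩, ‖v‖, fun k => ?_⟩
  rw [norm_smul, norm_pow, mul_comm]
  gcongr
  exact le_max_left _ _

theorem DecaysGeometrically.sum_range_pow_smul {f : ℕ → E} (hf : DecaysGeometrically f)
    {μ : 𝕜} (hμ : ‖μ‖ < 1) :
    DecaysGeometrically fun k => ∑ j ∈ range k, μ ^ (k - 1 - j) • f j := by
  obtain ⟨r, ⟨hr0, hr1⟩, C, hC⟩ := hf
  have hC0 : 0 ≤ C := (norm_nonneg _).trans (by simpa using hC 0)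
  set s := max r ‖μ‖
  have hs0 : 0 < s := lt_max_of_lt_left hr0
  have hs1 : s < 1 := max_lt hr1 hμ
  obtain ⟨D, hD⟩ := exists_nat_mul_pow_le hs0.le (show s < (s + 1) / 2 by linarith)
  refine ⟨(s + 1) / 2, ⟨by positivity, by linarith⟩, C * D / s, fun k => ?_⟩
  have hterm : ∀ j ∈ range k, ‖μ ^ (k - 1 - j) • f j‖ ≤ C * (s ^ j * s ^ (k - 1 - j)) := by
    intro j _
    rw [norm_smul, norm_pow, mul_comm, ← mul_assoc]
    gcongr
    · exact (hC j).trans (by gcongr; exact le_max_left _ _)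
    · exact le_max_right _ _
  have hks : (k : ℝ) * s ^ (k - 1) * s = k * s ^ k := by
    rcases k with _ | k
    · simp
    · rw [Nat.add_sub_cancel, mul_assoc, ← pow_succ]
  calc ‖∑ j ∈ range k, μ ^ (k - 1 - j) • f j‖
      ≤ ∑ j ∈ range k, C * (s ^ j * s ^ (k - 1 - j)) := norm_sum_le_of_le _ hterm
    _ = C * (k * s ^ k) / s := by
        rw [← mul_sum, geom_sum₂_self, ← hks, mul_div_assoc, mul_div_cancel_right₀ _ hs0.ne']
    _ ≤ C * (D * ((s + 1) / 2) ^ k) / s := by gcongr C * ?_ / s; exact hD k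
    _ = C * D / s * ((s + 1) / 2) ^ k := by ring

theorem decaysGeometrically_pow_apply_of_aeval_prod_eq_zero (φ : End 𝕜 E) {s : Multiset 𝕜}
    (hs : ∀ μ ∈ s, ‖μ‖ < 1) {v : E} (hv : aeval φ (s.map (X - C ·)).prod v = 0) :
    DecaysGeometrically fun k => (φ ^ k) v := by
  induction s using Multiset.induction generalizing v with
  | empty =>
    simp only [Multiset.map_zero, Multiset.prod_zero, map_one, End.one_apply] at hv
    exact ⟨1 / 2, ⟨by norm_num, by norm_num⟩, 0, fun k => by simp [hv]⟩
  | cons μ s ih =>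
    have hw : aeval φ (s.map (X - C ·)).prod (φ v - μ • v) = 0 := by
      rw [Multiset.map_cons, Multiset.prod_cons, mul_comm, map_mul] at hv
      simpa [End.mul_apply, Module.algebraMap_end_apply] using hv
    have hμ : ‖μ‖ < 1 := hs μ (Multiset.mem_cons_self μ s)
    have hdecay := ((ih (fun ν hν => hs ν (Multiset.mem_cons_of_mem hν)) hw).sum_range_pow_smul
      hμ).add (decaysGeometrically_pow_smul hμ v)
    simpa only [Pi.add_def, ← End.pow_apply_eq_sum_add] using hdecay

theorem decaysGeometrically_pow_apply_of_aeval_eq_zero [IsAlgClosed 𝕜] (φ : End 𝕜 E)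
    {p : 𝕜[X]} (hp : p ≠ 0) (hroots : ∀ μ, p.IsRoot μ → ‖μ‖ < 1) {v : E}
    (hv : aeval φ p v = 0) : DecaysGeometrically fun k => (φ ^ k) v := by
  refine decaysGeometrically_pow_apply_of_aeval_prod_eq_zero φ
    (fun μ hμ => hroots μ (isRoot_of_mem_roots hμ)) ?_
  rw [(IsAlgClosed.splits p).eq_prod_roots, map_mul, aeval_C, End.mul_apply,
    Module.algebraMap_end_apply, smul_eq_zero] at hv
  exact hv.resolve_left (leadingCoeff_ne_zero.mpr hp)

end GeometricDecay

section

variable {ι : Type*} [Fintype ι]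

theorem Pi.norm_algebraMap_comp {𝕜 𝕜' : Type*} [NormedField 𝕜] [SeminormedRing 𝕜']
    [NormedAlgebra 𝕜 𝕜'] [NormOneClass 𝕜'] (x : ι → 𝕜) : ‖algebraMap 𝕜 𝕜' ∘ x‖ = ‖x‖ := by
  simp [Pi.norm_def, Function.comp_def]

theorem Matrix.map_mulVec_algebraMap_comp {R S : Type*} [CommSemiring R] [Semiring S]
    [Algebra R S] (M : Matrix ι ι R) (x : ι → R) :
    M.map (algebraMap R S) *ᵥ (algebraMap R S ∘ x) = algebraMap R S ∘ (M *ᵥ x) :=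
  funext fun i => (RingHom.map_mulVec _ M x i).symm

theorem Matrix.pow_mulVec_sub_of_mulVec_eq_self [DecidableEq ι] {R : Type*} [CommRing R]
    (A : Matrix ι ι R) {x : ι → R} (hx : A *ᵥ x = x) (v : ι → R) (k : ℕ) :
    (A ^ k) *ᵥ v - x = (A ^ k) *ᵥ (v - x) := by
  have hfix : (A ^ k) *ᵥ x = x := by
    induction k with
    | zero => rw [pow_zero, one_mulVec]
    | succ k ih => rw [pow_succ, ← mulVec_mulVec, hx, ih]
  rw [mulVec_sub, hfix]

variable [DecidableEq ι]

theorem Matrix.mulVecLin_sub_one {R : Type*} [CommRing R] (A : Matrix ι ι R) :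
    (A - 1).mulVecLin = toLin' A - (1 : R) • 1 := by
  ext
  simp

theorem Matrix.aeval_toLin' {R : Type*} [CommRing R] (A : Matrix ι ι R) (p : R[X]) :
    aeval (toLin' A) p = toLin' (aeval A p) :=
  aeval_algHom_apply toLinAlgEquiv' A p

theorem Matrix.aeval_map_algebraMap {R S : Type*} [CommSemiring R] [CommSemiring S]
    [Algebra R S] (M : Matrix ι ι R) (p : R[X]) :
    aeval (M.map (algebraMap R S)) (p.map (algebraMap R S)) =
      (aeval M p).map (algebraMap R S) := by
  rw [Polynomial.aeval_map_algebraMap]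
  exact aeval_algHom_apply (Algebra.ofId R S).mapMatrix M p

theorem decaysGeometrically_pow_mulVec_of_aeval_eq_zero (A : Matrix ι ι ℝ) {p : ℝ[X]}
    (hp : p ≠ 0) (hroots : ∀ μ : ℂ, (p.map (algebraMap ℝ ℂ)).IsRoot μ → ‖μ‖ < 1) {y : ι → ℝ}
    (hy : aeval A p *ᵥ y = 0) : DecaysGeometrically fun k => (A ^ k) *ᵥ y := by
  set B := A.map (algebraMap ℝ ℂ)
  have hpow (k : ℕ) :
      (toLin' B ^ k) (algebraMap ℝ ℂ ∘ y) = algebraMap ℝ ℂ ∘ ((A ^ k) *ᵥ y) := by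
    rw [← toLin'_pow, toLin'_apply, ← Matrix.map_pow, Matrix.map_mulVec_algebraMap_comp]
  have haeval : aeval (toLin' B) (p.map (algebraMap ℝ ℂ)) (algebraMap ℝ ℂ ∘ y) = 0 := by
    rw [Matrix.aeval_toLin', toLin'_apply, Matrix.aeval_map_algebraMap,
      Matrix.map_mulVec_algebraMap_comp, hy]
    ext
    simp
  exact (decaysGeometrically_pow_apply_of_aeval_eq_zero (toLin' B)
    ((Polynomial.map_ne_zero_iff (algebraMap ℝ ℂ).injective).mpr hp) hroots haeval).congr_norm
    fun k => by rw [hpow, Pi.norm_algebraMap_comp]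

theorem IsSemiSchur.maxGenEigenspace_one {A : Matrix ι ι ℝ} (hA : IsSemiSchur A) :
    End.maxGenEigenspace (toLin' A) 1 = End.eigenspace (toLin' A) 1 := by
  have hmult : A.charpoly.rootMultiplicity 1 = (charpolyC A).rootMultiplicity 1 := by
    rw [charpolyC, eq_rootMultiplicity_map (algebraMap ℝ ℂ).injective, map_one]
  refine End.maxGenEigenspace_eq_eigenspace_of_finrank_eq
    (le_antisymm (LinearMap.finrank_eigenspace_le _ _) ?_)
  rw [Matrix.charpoly_toLin', hmult, End.eigenspace_def, ← Matrix.mulVecLin_sub_one]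
  by_cases h1 : (charpolyC A).IsRoot 1
  · rcases hA 1 h1 with h | h
    · simp at h
    · exact h.2.ge
  · simp [rootMultiplicity_eq_zero h1]

theorem IsSemiSchur.norm_lt_one_of_isRoot {A : Matrix ι ι ℝ} (hA : IsSemiSchur A) {q : ℝ[X]}
    (hq : q ∣ A.charpoly) (hq1 : ¬ q.IsRoot 1) {μ : ℂ}
    (hμ : (q.map (algebraMap ℝ ℂ)).IsRoot μ) : ‖μ‖ < 1 := by
  refine (hA μ (hμ.dvd (Polynomial.map_dvd (algebraMap ℝ ℂ) hq))).resolve_right ?_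
  rintro ⟨rfl, -⟩
  exact hq1 ((isRoot_map_iff (algebraMap ℝ ℂ).injective).mp (by rwa [map_one]))

end

/-- For a semi-Schur matrix `A`, the iterates `x(k) = Aᵏ x₀` converge exponentially to the
oblique projection `x*` of `x₀` onto `ker (A - I)` along `ran (A - I)`. -/
theorem semiSchur_LTI_convergence {n : ℕ} (A : Matrix (Fin n) (Fin n) ℝ)
    (hA : IsSemiSchur A) (x₀ : Fin n → ℝ) (xstar : Fin n → ℝ)
    (hker : xstar ∈ LinearMap.ker (A - 1).mulVecLin)
    (hran : x₀ - xstar ∈ LinearMap.range (A - 1).mulVecLin) :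
    ∃ C > (0:ℝ), ∃ c > (0:ℝ), ∀ k : ℕ,
      ‖(A ^ k).mulVec x₀ - xstar‖ ≤ C * Real.exp (-c * k) := by
  obtain ⟨q, hfac, hq1⟩ :=
    A.charpoly.exists_eq_pow_rootMultiplicity_mul_and_not_dvd A.charpoly_monic.ne_zero 1
  have hCH : aeval (toLin' A) ((X - C 1) ^ A.charpoly.rootMultiplicity 1 * q) = 0 := by
    rw [← hfac, ← Matrix.charpoly_toLin']
    exact LinearMap.aeval_self_charpoly _
  have hqy : aeval A q *ᵥ (x₀ - xstar) = 0 := by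
    rw [Matrix.mulVecLin_sub_one] at hran
    rw [← toLin'_apply, ← Matrix.aeval_toLin']
    exact End.aeval_apply_eq_zero_of_mem_range hCH hA.maxGenEigenspace_one hran
  have hroots (μ : ℂ) : (q.map (algebraMap ℝ ℂ)).IsRoot μ → ‖μ‖ < 1 :=
    hA.norm_lt_one_of_isRoot (Dvd.intro_left _ hfac.symm) (mt dvd_iff_isRoot.mpr hq1)
  obtain ⟨C, hC, c, hc, hbound⟩ := (decaysGeometrically_pow_mulVec_of_aeval_eq_zero A
    (right_ne_zero_of_mul (hfac ▸ A.charpoly_monic.ne_zero)) hroots hqy).exists_exp_bound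
  have hfix : A *ᵥ xstar = xstar := by simpa [sub_mulVec, sub_eq_zero] using hker
  exact ⟨C, hC, c, hc, fun k => A.pow_mulVec_sub_of_mulVec_eq_self hfix x₀ k ▸ hbound k⟩
end

section
/- Let Θ ∈ ℝ^{n×l}, Ξ ∈ ℝ^{n×m}, a > 0, and b ∈ ℝ. Then the block matrix M = [[−ΘΘᵀ − aΞΞᵀ, −bΞ]; [bΞᵀ, 0]] ∈ ℝ^{(n+m)×(n+m)} is semi-Hurwitz. -/
/-! Write the matrix as `K - R Rᵀ` with `K = [[0, -bΞ], [bΞᵀ, 0]]` skew-symmetric and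
`R = [[Θ, √a Ξ], [0, 0]]`. For a complex eigenpair `M v = μ v`, the real part of `v* M v` gives
`Re μ · ‖v‖² = -‖Rᵀ v‖²`, so `Re μ ≤ 0`, and `Re μ = 0` forces `Rᵀ v = 0`, in particular
`Ξᵀ x = 0` for the top block `x` of `v`; the block shape of `K` then forces `μ = 0`.
The same identity with `μ = 0` shows `ker M ⊆ ker Mᵀ`, hence `ker M² = ker M`: the eigenvalue `0`
is semisimple, so its algebraic multiplicity is `dim ker M`. -/

open Matrix Polynomial

/-- A real square matrix is *semi-Hurwitz* if every (complex) eigenvalue either has negative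
real part, or equals `0` and `0` is non-defective. -/
def IsSemiHurwitz {ι : Type*} [Fintype ι] [DecidableEq ι] (A : Matrix ι ι ℝ) : Prop :=
  ∀ μ : ℂ, (charpolyC A).IsRoot μ →
    μ.re < 0 ∨ (μ = 0 ∧
      Module.finrank ℝ (LinearMap.ker A.mulVecLin) = (charpolyC A).rootMultiplicity 0)

namespace Module.End

lemma maxGenEigenspace_zero_eq_ker {R M : Type*} [CommRing R] [AddCommGroup M] [Module R M]
    {f : End R M} (hf : ∀ x, f (f x) = 0 → f x = 0) :
    f.maxGenEigenspace 0 = LinearMap.ker f := by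
  have hpow : ∀ k x, (f ^ (k + 1)) x = 0 → f x = 0 := by
    intro k
    induction k with
    | zero => simp
    | succ k ih => exact fun x hx => hf x (ih (f x) (by rwa [pow_succ] at hx))
  ext x
  simp only [mem_maxGenEigenspace, zero_smul, sub_zero, LinearMap.mem_ker]
  refine ⟨fun ⟨k, hk⟩ => ?_, fun hx => ⟨1, by simpa using hx⟩⟩
  cases k with
  | zero => simp_all
  | succ k => exact hpow k x hk

end Module.End

namespace Matrix

lemma finrank_ker_mulVecLin_eq_rootMultiplicity_charpoly {ι F : Type*} [Fintype ι]
    [DecidableEq ι] [Field F] {A : Matrix ι ι F} (hA : ∀ u, A *ᵥ A *ᵥ u = 0 → A *ᵥ u = 0) :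
    Module.finrank F (LinearMap.ker A.mulVecLin) = A.charpoly.rootMultiplicity 0 := by
  rw [rootMultiplicity_eq_natTrailingDegree', ← charpoly_mulVecLin,
    ← LinearMap.finrank_maxGenEigenspace_zero_eq,
    Module.End.maxGenEigenspace_zero_eq_ker (fun u => hA u)]

lemma exists_mulVec_eq_smul_of_isRoot_charpoly {ι F : Type*} [Fintype ι] [DecidableEq ι]
    [Field F] {A : Matrix ι ι F} {μ : F} (h : A.charpoly.IsRoot μ) :
    ∃ v, v ≠ 0 ∧ A *ᵥ v = μ • v := by
  rw [← charpoly_toLin', ← Module.End.hasEigenvalue_iff_isRoot_charpoly] at h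
  obtain ⟨v, hv, hv0⟩ := h.exists_hasEigenvector
  exact ⟨v, hv0, by simpa using Module.End.mem_eigenspace_iff.mp hv⟩

open scoped ComplexOrder

section Skew

variable {ι κ 𝕜 : Type*} [Fintype ι] [Fintype κ] [RCLike 𝕜]

lemma re_star_dotProduct_mulVec_eq_zero {K : Matrix ι ι 𝕜} (hK : Kᴴ = -K) (v : ι → 𝕜) :
    RCLike.re (star v ⬝ᵥ K *ᵥ v) = 0 := by
  have h : star (star v ⬝ᵥ K *ᵥ v) = -(star v ⬝ᵥ K *ᵥ v) := by
    rw [← star_dotProduct_star, star_star, star_mulVec, ← dotProduct_mulVec, hK, neg_mulVec,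
      dotProduct_neg]
  have := congrArg RCLike.re h
  rw [RCLike.star_def, RCLike.conj_re, map_neg] at this
  linarith

lemma star_dotProduct_mul_conjTranspose_mulVec (R : Matrix ι κ 𝕜) (v : ι → 𝕜) :
    star v ⬝ᵥ (R * Rᴴ) *ᵥ v = star (Rᴴ *ᵥ v) ⬝ᵥ Rᴴ *ᵥ v := by
  rw [← mulVec_mulVec, dotProduct_mulVec, star_mulVec, conjTranspose_conjTranspose]

variable {K : Matrix ι ι 𝕜} (hK : Kᴴ = -K) (R : Matrix ι κ 𝕜) {μ : 𝕜} {v : ι → 𝕜}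
include hK

lemma re_mul_re_star_dotProduct_self (h : (K - R * Rᴴ) *ᵥ v = μ • v) :
    RCLike.re μ * RCLike.re (star v ⬝ᵥ v) = -RCLike.re (star (Rᴴ *ᵥ v) ⬝ᵥ Rᴴ *ᵥ v) := by
  have h' := congrArg (fun w => RCLike.re (star v ⬝ᵥ w)) h
  simp only [sub_mulVec, dotProduct_sub, map_sub, re_star_dotProduct_mulVec_eq_zero hK,
    star_dotProduct_mul_conjTranspose_mulVec, dotProduct_smul, smul_eq_mul, RCLike.mul_re,
    (RCLike.nonneg_iff.mp (dotProduct_star_self_nonneg v)).2, mul_zero, sub_zero] at h'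
  linarith

lemma re_nonpos_of_mulVec_eq_smul (hv : v ≠ 0) (h : (K - R * Rᴴ) *ᵥ v = μ • v) :
    RCLike.re μ ≤ 0 := by
  have hpos := (RCLike.pos_iff.mp (dotProduct_star_self_pos_iff.mpr hv)).1
  have hnonneg := (RCLike.nonneg_iff.mp (dotProduct_star_self_nonneg (Rᴴ *ᵥ v))).1
  nlinarith [re_mul_re_star_dotProduct_self hK R h]

lemma conjTranspose_mulVec_eq_zero_of_re_eq_zero (h : (K - R * Rᴴ) *ᵥ v = μ • v)
    (hμ : RCLike.re μ = 0) : Rᴴ *ᵥ v = 0 := by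
  have hre := re_mul_re_star_dotProduct_self hK R h
  rw [hμ, zero_mul, zero_eq_neg] at hre
  rw [← dotProduct_star_self_eq_zero, RCLike.ext_iff]
  exact ⟨by simpa using hre,
    by simpa using (RCLike.nonneg_iff.mp (dotProduct_star_self_nonneg _)).2⟩

lemma mulVec_eq_zero_of_mulVec_mulVec_eq_zero {u : ι → 𝕜}
    (h : (K - R * Rᴴ) *ᵥ (K - R * Rᴴ) *ᵥ u = 0) : (K - R * Rᴴ) *ᵥ u = 0 := by
  set w := (K - R * Rᴴ) *ᵥ u
  have hRw : Rᴴ *ᵥ w = 0 :=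
    conjTranspose_mulVec_eq_zero_of_re_eq_zero hK R (μ := 0) (by rw [h, zero_smul]) (map_zero _)
  have hKw : K *ᵥ w = 0 := by
    rwa [sub_mulVec, ← mulVec_mulVec, hRw, mulVec_zero, sub_zero] at h
  have hTw : ((K - R * Rᴴ)ᴴ * (K - R * Rᴴ)) *ᵥ u = 0 := by
    rw [← mulVec_mulVec, conjTranspose_sub, conjTranspose_mul, conjTranspose_conjTranspose, hK,
      sub_mulVec, neg_mulVec, ← mulVec_mulVec, hRw, hKw, mulVec_zero, neg_zero, sub_zero]
  rwa [conjTranspose_mul_self_mulVec_eq_zero] at hTw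

end Skew

lemma eq_zero_of_fromBlocks_zero_mulVec_eq_smul {n m F : Type*} [Fintype n] [Fintype m]
    [Field F] {B : Matrix n m F} {C : Matrix m n F} {μ : F} {v : n ⊕ m → F} (hv : v ≠ 0)
    (h : fromBlocks 0 B C 0 *ᵥ v = μ • v) (hC : C *ᵥ (v ∘ Sum.inl) = 0) : μ = 0 := by
  by_contra hμ
  rw [fromBlocks_mulVec, hC, zero_mulVec, zero_mulVec, zero_add, add_zero] at h
  have hy : v ∘ Sum.inr = 0 := funext fun j => by
    simpa [hμ, eq_comm (a := (0 : F))] using congrFun h (Sum.inr j)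
  rw [hy, mulVec_zero] at h
  have hx : v ∘ Sum.inl = 0 := funext fun i => by
    simpa [hμ, eq_comm (a := (0 : F))] using congrFun h (Sum.inl i)
  exact hv (funext (Sum.rec (congrFun hx) (congrFun hy)))

lemma conjTranspose_map_algebraMap {m n : Type*} (A : Matrix m n ℝ) :
    (A.map (algebraMap ℝ ℂ))ᴴ = Aᵀ.map (algebraMap ℝ ℂ) := by
  rw [← conjTranspose_map _ fun x => algebraMap_star_comm x,
    conjTranspose_eq_transpose_of_trivial]

end Matrix

theorem isSemiHurwitz_sub_mul_transpose {ι κ : Type*} [Fintype ι] [DecidableEq ι] [Fintype κ]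
    {K : Matrix ι ι ℝ} (hK : Kᵀ = -K) (R : Matrix ι κ ℝ)
    (hR : ∀ (μ : ℂ) (v : ι → ℂ), v ≠ 0 → K.map (algebraMap ℝ ℂ) *ᵥ v = μ • v →
      (R.map (algebraMap ℝ ℂ))ᴴ *ᵥ v = 0 → μ = 0) :
    IsSemiHurwitz (K - R * Rᵀ) := by
  set Kc := K.map (algebraMap ℝ ℂ)
  set Rc := R.map (algebraMap ℝ ℂ)
  have hKc : Kcᴴ = -Kc := by
    rw [conjTranspose_map_algebraMap, hK, Matrix.map_neg _ (map_neg _)]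
  have hAc : (K - R * Rᵀ).map (algebraMap ℝ ℂ) = Kc - Rc * Rcᴴ := by
    rw [conjTranspose_map_algebraMap, Matrix.map_sub _ (map_sub _), Matrix.map_mul]
  intro μ hμ
  rw [charpolyC, ← charpoly_map, hAc] at hμ
  obtain ⟨v, hv, hμv⟩ := exists_mulVec_eq_smul_of_isRoot_charpoly hμ
  rcases (re_nonpos_of_mulVec_eq_smul hKc Rc hv hμv).lt_or_eq with hlt | hre
  · exact Or.inl hlt
  have hRv := conjTranspose_mulVec_eq_zero_of_re_eq_zero hKc Rc hμv hre
  refine Or.inr ⟨hR μ v hv ?_ hRv, ?_⟩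
  · rwa [sub_mulVec, ← mulVec_mulVec, hRv, mulVec_zero, sub_zero] at hμv
  have hmult := eq_rootMultiplicity_map (p := (K - R * Rᵀ).charpoly) (algebraMap ℝ ℂ).injective 0
  rw [map_zero] at hmult
  rw [charpolyC, ← hmult, finrank_ker_mulVecLin_eq_rootMultiplicity_charpoly]
  have hK' : Kᴴ = -K := by rwa [conjTranspose_eq_transpose_of_trivial]
  simpa using fun u => mulVec_eq_zero_of_mulVec_mulVec_eq_zero hK' R (u := u)

section BlockMatrix

variable {n l m : Type*} (Θ : Matrix n l ℝ) (Ξ : Matrix n m ℝ) (a b : ℝ)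

lemma fromBlocks_eq_sub_mul_transpose [Fintype l] [Fintype m] (ha : 0 ≤ a) :
    fromBlocks (-(Θ * Θᵀ) - a • (Ξ * Ξᵀ)) (-b • Ξ) (b • Ξᵀ) 0 =
      fromBlocks 0 (-b • Ξ) (b • Ξᵀ) 0 -
        fromBlocks Θ (√a • Ξ) 0 0 * (fromBlocks Θ (√a • Ξ) 0 0)ᵀ := by
  ext (i | i) (j | j) <;>
    simp [fromBlocks_transpose, fromBlocks_multiply, smul_smul, Real.mul_self_sqrt ha,
      sub_eq_neg_add]

lemma transpose_fromBlocks_zero_smul :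
    (fromBlocks 0 (-b • Ξ) (b • Ξᵀ) 0)ᵀ = -fromBlocks 0 (-b • Ξ) (b • Ξᵀ) 0 := by
  simp [fromBlocks_transpose, fromBlocks_neg]

lemma eq_zero_of_mulVec_eq_smul_of_conjTranspose_mulVec_eq_zero [Fintype n] [Fintype m]
    (ha : 0 < a) {μ : ℂ} {v : n ⊕ m → ℂ} (hv : v ≠ 0)
    (hK : (fromBlocks 0 (-b • Ξ) (b • Ξᵀ) 0).map (algebraMap ℝ ℂ) *ᵥ v = μ • v)
    (hR : ((fromBlocks Θ (√a • Ξ) 0 0).map (algebraMap ℝ ℂ))ᴴ *ᵥ v = 0) : μ = 0 := by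
  have hΞ : Ξᵀ.map (algebraMap ℝ ℂ) *ᵥ (v ∘ Sum.inl) = 0 := by
    rw [conjTranspose_map_algebraMap, fromBlocks_transpose, fromBlocks_map, fromBlocks_mulVec,
      ← Sum.elim_zero_zero, Sum.elim_eq_iff] at hR
    have h := hR.2
    rw [transpose_zero, Matrix.map_zero _ (map_zero _), zero_mulVec, add_zero, transpose_smul,
      Matrix.map_smul _ _ (fun x => by simp), smul_mulVec, smul_eq_zero] at h
    exact h.resolve_left (Real.sqrt_pos.2 ha).ne'
  rw [fromBlocks_map, Matrix.map_zero _ (map_zero _)] at hK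
  refine eq_zero_of_fromBlocks_zero_mulVec_eq_smul hv hK ?_
  rw [Matrix.map_smul _ _ (fun x => by simp), smul_mulVec, hΞ, smul_zero]

end BlockMatrix

/-- The block matrix `M = [[−ΘΘᵀ − aΞΞᵀ, −bΞ]; [bΞᵀ, 0]]` is semi-Hurwitz for all
`Θ ∈ ℝ^{n×l}`, `Ξ ∈ ℝ^{n×m}`, `a > 0` and `b ∈ ℝ`. -/
theorem blockMatrix_isSemiHurwitz {n l m : ℕ}
    (Θ : Matrix (Fin n) (Fin l) ℝ) (Ξ : Matrix (Fin n) (Fin m) ℝ)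
    (a : ℝ) (ha : 0 < a) (b : ℝ) :
    IsSemiHurwitz
      (Matrix.fromBlocks (-(Θ * Θᵀ) - a • (Ξ * Ξᵀ)) (-b • Ξ) (b • Ξᵀ) 0) := by
  rw [fromBlocks_eq_sub_mul_transpose Θ Ξ a b ha.le]
  exact isSemiHurwitz_sub_mul_transpose (transpose_fromBlocks_zero_smul Ξ b) _
    fun _ _ ↦ eq_zero_of_mulVec_eq_smul_of_conjTranspose_mulVec_eq_zero Θ Ξ a b ha
end

section
/- If A ∈ ℝ^{n×n} is semi-Hurwitz, then there exists ᾱ > 0 such that for every α ∈ (0, ᾱ) the matrix I + αA is semi-Schur. -/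
/-!
The eigenvalues of `1 + α • A` are the numbers `1 + α μ`, `μ` an eigenvalue of `A`, with the same
algebraic multiplicities, and `ker (α • A) = ker A`; so the non-defective eigenvalue `0` of `A`
becomes the non-defective eigenvalue `1`. An eigenvalue with `Re μ < 0` satisfies
`‖1 + α μ‖² = 1 + α (2 Re μ + α ‖μ‖²) < 1` for small `α > 0`, and there are finitely many of them.
-/

open Matrix Polynomial

namespace Matrix
variable {ι K : Type*} [Fintype ι] [DecidableEq ι] [Field K]

theorem charpoly_smul (M : Matrix ι ι K) {a : K} (ha : a ≠ 0) :
    (a • M).charpoly = C (a ^ Fintype.card ι) * M.charpoly.comp (C a⁻¹ * X) := by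
  have hmap : (compRingHom (C a⁻¹ * X)).mapMatrix (charmatrix M) =
      scalar ι (C a⁻¹ * X) - M.map C := by
    ext i j
    by_cases h : i = j <;> simp [h]
  have hsmul : C a • (scalar ι (C a⁻¹ * X) - M.map C) = charmatrix (a • M) := by
    ext i j
    by_cases h : i = j
    · simp only [h, smul_apply, sub_apply, scalar_apply, diagonal_apply_eq, map_apply,
        charmatrix_apply_eq, smul_eq_mul, mul_sub, ← mul_assoc, ← C_mul, mul_inv_cancel₀ ha,
        C_1, one_mul]
    · simp [h]
  rw [charpoly, ← hsmul, det_smul, charpoly, ← coe_compRingHom_apply, RingHom.map_det, hmap,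
    C_pow]

theorem charpoly_one_add_smul (M : Matrix ι ι K) {a : K} (ha : a ≠ 0) :
    (1 + a • M).charpoly = C (a ^ Fintype.card ι) * M.charpoly.comp (C a⁻¹ * X - C a⁻¹) := by
  have h : 1 + a • M = a • M - scalar ι (-1 : K) := by
    rw [map_neg, sub_neg_eq_add, add_comm, scalar_apply, diagonal_one]
  rw [h, charpoly_sub_scalar, charpoly_smul M ha, mul_comp, C_comp, comp_assoc]
  simp [mul_add, sub_eq_add_neg]

theorem ker_mulVecLin_smul {m n : Type*} [Fintype n] (A : Matrix m n K) {a : K} (ha : a ≠ 0) :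
    LinearMap.ker (a • A).mulVecLin = LinearMap.ker A.mulVecLin := by
  ext v
  simp [ha]

end Matrix

open Filter Topology

section
variable {ι : Type*} [Fintype ι] [DecidableEq ι]

theorem charpolyC_ne_zero (A : Matrix ι ι ℝ) : charpolyC A ≠ 0 :=
  (A.charpoly_monic.map (algebraMap ℝ ℂ)).ne_zero

theorem charpolyC_one_add_smul (A : Matrix ι ι ℝ) {α : ℝ} (hα : α ≠ 0) :
    charpolyC (1 + α • A) =
      C ((α : ℂ) ^ Fintype.card ι) * (charpolyC A).comp (C (α : ℂ)⁻¹ * X - C (α : ℂ)⁻¹) := by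
  simp [charpolyC, A.charpoly_one_add_smul hα, Polynomial.map_comp]

theorem rootMultiplicity_charpolyC_one_add_smul (A : Matrix ι ι ℝ) {α : ℝ} (hα : α ≠ 0)
    (μ : ℂ) :
    (charpolyC (1 + α • A)).rootMultiplicity (1 + α * μ) = (charpolyC A).rootMultiplicity μ := by
  have hα' : (α : ℂ) ≠ 0 := by exact_mod_cast hα
  rw [charpolyC_one_add_smul A hα, ← count_roots, roots_C_mul _ (pow_ne_zero _ hα'), count_roots,
    sub_eq_add_neg, ← C_neg, rootMultiplicity_comp_C_mul_X_add_C _ _ _ _ (inv_ne_zero hα').isUnit]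
  congr 1
  field_simp
  ring

theorem isRoot_charpolyC_one_add_smul (A : Matrix ι ι ℝ) {α : ℝ} (hα : α ≠ 0) (μ : ℂ) :
    (charpolyC (1 + α • A)).IsRoot (1 + α * μ) ↔ (charpolyC A).IsRoot μ := by
  rw [← rootMultiplicity_pos (charpolyC_ne_zero _), ← rootMultiplicity_pos (charpolyC_ne_zero _),
    rootMultiplicity_charpolyC_one_add_smul A hα]

theorem IsSemiHurwitz.isSemiSchur_one_add_smul {A : Matrix ι ι ℝ} (hA : IsSemiHurwitz A)
    {α : ℝ} (hα : 0 < α) (hstable : ∀ μ, (charpolyC A).IsRoot μ → μ.re < 0 → ‖1 + α * μ‖ < 1) :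
    IsSemiSchur (1 + α • A) := by
  intro ν hν
  obtain ⟨μ, rfl⟩ : ∃ μ : ℂ, ν = 1 + α * μ := 
    ⟨(ν - 1) / α, by rw [mul_div_cancel₀ _ (by exact_mod_cast hα.ne'), add_sub_cancel]⟩
  have hμ := (isRoot_charpolyC_one_add_smul A hα.ne' μ).1 hν
  rcases hA μ hμ with hre | ⟨rfl, hdefect⟩
  · exact Or.inl (hstable μ hμ hre)
  · refine Or.inr ⟨by simp, ?_⟩
    rw [add_sub_cancel_left, Matrix.ker_mulVecLin_smul A hα.ne', hdefect,
      ← rootMultiplicity_charpolyC_one_add_smul A hα.ne' 0, mul_zero, add_zero]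

end

theorem Complex.norm_one_add_mul_lt_one {μ : ℂ} {α : ℝ} (hα : 0 < α)
    (hαμ : α * ‖μ‖ ^ 2 < -2 * μ.re) : ‖1 + α * μ‖ < 1 := by
  have hsq : ‖1 + α * μ‖ ^ 2 = 1 + α * (2 * μ.re + α * ‖μ‖ ^ 2) := by
    rw [Complex.sq_norm, Complex.sq_norm, Complex.normSq_apply, Complex.normSq_apply]
    simp only [Complex.add_re, Complex.one_re, Complex.mul_re, Complex.ofReal_re,
      Complex.ofReal_im, zero_mul, sub_zero, Complex.add_im, Complex.one_im, Complex.mul_im,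
      add_zero, zero_add]
    ring
  have : ‖1 + α * μ‖ ^ 2 < 1 ^ 2 := by
    rw [hsq, one_pow]
    nlinarith
  exact (pow_lt_pow_iff_left₀ (norm_nonneg _) zero_le_one two_ne_zero).1 this

theorem Complex.eventually_norm_one_add_mul_lt_one {μ : ℂ} (hμ : μ.re < 0) :
    ∀ᶠ α : ℝ in 𝓝[>] 0, ‖1 + α * μ‖ < 1 := by
  have hsmall : ∀ᶠ α : ℝ in 𝓝[>] 0, α * ‖μ‖ ^ 2 < -2 * μ.re := by
    have hlim : Tendsto (fun α : ℝ => α * ‖μ‖ ^ 2) (𝓝[>] 0) (𝓝 (0 * ‖μ‖ ^ 2)) :=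
      tendsto_nhdsWithin_of_tendsto_nhds (tendsto_id.mul_const _)
    exact hlim.eventually (gt_mem_nhds (by linarith))
  filter_upwards [self_mem_nhdsWithin, hsmall] with α hα hαμ
  exact Complex.norm_one_add_mul_lt_one hα hαμ

/-- If `A` is semi-Hurwitz, then `I + αA` is semi-Schur for all sufficiently small `α > 0`. -/
theorem one_add_smul_isSemiSchur_of_isSemiHurwitz {n : ℕ} (A : Matrix (Fin n) (Fin n) ℝ)
    (hA : IsSemiHurwitz A) :
    ∃ αbar > (0:ℝ), ∀ α : ℝ, 0 < α → α < αbar →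
      IsSemiSchur ((1 : Matrix (Fin n) (Fin n) ℝ) + α • A) := by
  have hstableRoots : {μ : ℂ | (charpolyC A).IsRoot μ ∧ μ.re < 0}.Finite :=
    (finite_setOfPred_isRoot (charpolyC_ne_zero A)).subset fun _ hμ => hμ.1
  have hev : ∀ᶠ α : ℝ in 𝓝[>] 0, IsSemiSchur (1 + α • A) := by
    filter_upwards [self_mem_nhdsWithin, (eventually_all_finite hstableRoots).2
      fun μ hμ => Complex.eventually_norm_one_add_mul_lt_one hμ.2] with α hα hstable
    exact hA.isSemiSchur_one_add_smul hα fun μ hroot hre => hstable μ ⟨hroot, hre⟩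
  obtain ⟨αbar, hαbar, hsub⟩ := mem_nhdsGT_iff_exists_Ioo_subset.1 hev
  exact ⟨αbar, hαbar, fun α h0 h1 => hsub ⟨h0, h1⟩⟩
end
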